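/- arXiv:math/0504447 — 9 statements merged into one kernel-verified Lean document; each statement's English description precedes it below -/
import Mathlib

section
/- Every countable group admits a left-invariant proper metric, i.e., a left-invariant metric in which every bounded set is finite. -/
/-!
Enumerate `G` injectively by `e : G → ℕ` and give every `g` the weight
`w g = e g + e g⁻¹ + 1`. The weighted word length `ℓ g`, the least total weight of a word
representing `g`, is a group norm. Only finitely many elements have weight at most `n`, and a word
of total weight at most `n` has at most `n` letters, so `ℓ` has finite sublevel sets. Hence
`d x y = ℓ (x⁻¹ * y)` is a left-invariant metric whose bounded sets are finite.
-/

/-- `d` is a metric on `X` (given as an explicit distance function). -/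
def IsMetricD {X : Type*} (d : X → X → ℝ) : Prop :=
  (∀ x y, 0 ≤ d x y) ∧ (∀ x y, d x y = 0 ↔ x = y) ∧ (∀ x y, d x y = d y x) ∧
    ∀ x y z, d x z ≤ d x y + d y z

/-- A set is bounded with respect to the distance function `d`. -/
def IsBoundedD {X : Type*} (d : X → X → ℝ) (B : Set X) : Prop :=
  ∃ C : ℝ, ∀ x ∈ B, ∀ y ∈ B, d x y ≤ C

/-- `f` is bornologous with respect to the distance functions `dX`, `dY`. -/
def BornologousD {X Y : Type*} (dX : X → X → ℝ) (dY : Y → Y → ℝ) (f : X → Y) : Prop :=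
  ∀ R > (0 : ℝ), ∃ S > (0 : ℝ), ∀ x y, dX x y < R → dY (f x) (f y) < S

/-- `f` is metrically proper: preimages of bounded sets are bounded. -/
def MetricallyProperD {X Y : Type*} (dX : X → X → ℝ) (dY : Y → Y → ℝ) (f : X → Y) : Prop :=
  ∀ B : Set Y, IsBoundedD dY B → IsBoundedD dX (f ⁻¹' B)

/-- A coarse map is bornologous and metrically proper. -/
def CoarseMapD {X Y : Type*} (dX : X → X → ℝ) (dY : Y → Y → ℝ) (f : X → Y) : Prop :=
  BornologousD dX dY f ∧ MetricallyProperD dX dY f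

/-- Two maps are close if pointwise distances are uniformly bounded. -/
def CloseD {X Y : Type*} (dY : Y → Y → ℝ) (f g : X → Y) : Prop :=
  ∃ C : ℝ, ∀ x, dY (f x) (g x) ≤ C

/-- `f` is a coarse equivalence: a coarse map with a coarse inverse up to closeness. -/
def CoarseEquivD {X Y : Type*} (dX : X → X → ℝ) (dY : Y → Y → ℝ) (f : X → Y) : Prop :=
  CoarseMapD dX dY f ∧ ∃ g : Y → X, CoarseMapD dY dX g ∧
    CloseD dY (f ∘ g) id ∧ CloseD dX (g ∘ f) id

namespace GroupNorm

variable {G : Type*} [Group G] (N : GroupNorm G)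

theorem isMetricD_inv_mul : IsMetricD fun x y : G => N (x⁻¹ * y) := by
  refine ⟨fun x y => apply_nonneg N _, fun x y => ?_, fun x y => ?_, fun x y z => ?_⟩ <;> dsimp only
  · rw [map_eq_zero_iff_eq_one, inv_mul_eq_one]
  · rw [← map_inv_eq_map N, mul_inv_rev, inv_inv]
  · calc N (x⁻¹ * z) = N ((x⁻¹ * y) * (y⁻¹ * z)) := by group
      _ ≤ N (x⁻¹ * y) + N (y⁻¹ * z) := map_mul_le_add N _ _

theorem finite_of_isBoundedD_inv_mul (hN : ∀ C : ℝ, {g | N g ≤ C}.Finite) {B : Set G}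
    (hB : IsBoundedD (fun x y : G => N (x⁻¹ * y)) B) : B.Finite := by
  obtain ⟨C, hC⟩ := hB
  rcases B.eq_empty_or_nonempty with rfl | ⟨b, hb⟩
  · exact Set.finite_empty
  refine ((hN C).image (b * ·)).subset fun x hx => ⟨b⁻¹ * x, hC b hb x hx, ?_⟩
  simp

end GroupNorm

section WeightedWordLength

variable {G : Type*} [Group G] (w : G → ℕ)

noncomputable def weightedWordLength (g : G) : ℕ :=
  sInf {n | ∃ l : List G, l.prod = g ∧ (l.map w).sum = n}

theorem exists_prod_eq_sum_eq_weightedWordLength (g : G) :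
    ∃ l : List G, l.prod = g ∧ (l.map w).sum = weightedWordLength w g :=
  Nat.sInf_mem (s := {n | ∃ l : List G, l.prod = g ∧ (l.map w).sum = n})
    ⟨w g, [g], List.prod_singleton, by simp⟩

theorem weightedWordLength_le_sum {g : G} {l : List G} (h : l.prod = g) :
    weightedWordLength w g ≤ (l.map w).sum :=
  Nat.sInf_le ⟨l, h, rfl⟩

theorem weightedWordLength_one : weightedWordLength w (1 : G) = 0 :=
  Nat.le_zero.mp (weightedWordLength_le_sum w (l := []) List.prod_nil)

theorem weightedWordLength_mul_le (g h : G) :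
    weightedWordLength w (g * h) ≤ weightedWordLength w g + weightedWordLength w h := by
  obtain ⟨l₁, hg, hl₁⟩ := exists_prod_eq_sum_eq_weightedWordLength w g
  obtain ⟨l₂, hh, hl₂⟩ := exists_prod_eq_sum_eq_weightedWordLength w h
  calc weightedWordLength w (g * h) ≤ ((l₁ ++ l₂).map w).sum :=
        weightedWordLength_le_sum w (by rw [List.prod_append, hg, hh])
    _ = weightedWordLength w g + weightedWordLength w h := by
        rw [List.map_append, List.sum_append, hl₁, hl₂]

variable {w}

theorem weightedWordLength_inv_le (hw : ∀ g, w g⁻¹ = w g) (g : G) :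
    weightedWordLength w g⁻¹ ≤ weightedWordLength w g := by
  obtain ⟨l, hg, hl⟩ := exists_prod_eq_sum_eq_weightedWordLength w g
  calc weightedWordLength w g⁻¹ ≤ (((l.map (·⁻¹)).reverse).map w).sum :=
        weightedWordLength_le_sum w (by rw [← List.prod_inv_reverse, hg])
    _ = weightedWordLength w g := by simp [Function.comp_def, hw, hl]

theorem weightedWordLength_inv (hw : ∀ g, w g⁻¹ = w g) (g : G) :
    weightedWordLength w g⁻¹ = weightedWordLength w g :=
  (weightedWordLength_inv_le hw g).antisymm (by simpa using weightedWordLength_inv_le hw g⁻¹)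

theorem eq_one_of_weightedWordLength_eq_zero (hw : ∀ g, 0 < w g) {g : G}
    (h : weightedWordLength w g = 0) : g = 1 := by
  obtain ⟨l, hg, hl⟩ := exists_prod_eq_sum_eq_weightedWordLength w g
  have hnil : l = [] := List.eq_nil_iff_forall_not_mem.mpr fun x hx =>
    (hw x).ne' (List.sum_eq_zero_iff.mp (hl.trans h) _ (List.mem_map_of_mem hx))
  rw [← hg, hnil, List.prod_nil]

theorem finite_setOf_weightedWordLength_le (hw : ∀ g, 0 < w g)
    (hfin : ∀ n, {g | w g ≤ n}.Finite) (n : ℕ) :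
    {g : G | weightedWordLength w g ≤ n}.Finite := by
  have : Finite {g // w g ≤ n} := (hfin n).to_subtype
  refine ((List.finite_length_le {g // w g ≤ n} n).image
    fun l => (l.map Subtype.val).prod).subset fun g hg => ?_
  obtain ⟨l, hl_prod, hl⟩ := exists_prod_eq_sum_eq_weightedWordLength w g
  have hsum : (l.map w).sum ≤ n := hl.trans_le hg
  lift l to List {g // w g ≤ n} using fun x hx =>
    (List.le_sum_of_mem (List.mem_map_of_mem hx)).trans hsum
  refine ⟨l, ?_, hl_prod⟩
  calc l.length = (l.map ((↑) : {g // w g ≤ n} → G) |>.map w).length := by simp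
    _ ≤ _ := List.length_le_sum_of_one_le _ (by
        simp only [List.map_map, List.mem_map]
        rintro _ ⟨x, -, rfl⟩
        exact hw x)
    _ ≤ n := hsum

noncomputable def weightedWordNorm (hpos : ∀ g, 0 < w g) (hinv : ∀ g, w g⁻¹ = w g) :
    GroupNorm G where
  toFun g := weightedWordLength w g
  map_one' := by simp [weightedWordLength_one]
  mul_le' g h := mod_cast weightedWordLength_mul_le w g h
  inv' g := congrArg _ (weightedWordLength_inv hinv g)
  eq_one_of_map_eq_zero' _ h := eq_one_of_weightedWordLength_eq_zero hpos (mod_cast h)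

theorem finite_setOf_weightedWordNorm_le (hpos : ∀ g, 0 < w g) (hinv : ∀ g, w g⁻¹ = w g)
    (hfin : ∀ n, {g | w g ≤ n}.Finite) (C : ℝ) :
    {g : G | weightedWordNorm hpos hinv g ≤ C}.Finite :=
  (finite_setOf_weightedWordLength_le hpos hfin ⌊C⌋₊).subset fun _ hg => Nat.le_floor hg

end WeightedWordLength

theorem exists_weight_pos_inv_finite_setOf_le (G : Type*) [InvolutiveInv G] [Countable G] :
    ∃ w : G → ℕ, (∀ g, 0 < w g) ∧ (∀ g, w g⁻¹ = w g) ∧ ∀ n, {g | w g ≤ n}.Finite := by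
  obtain ⟨e, he⟩ := Countable.exists_injective_nat G
  refine ⟨fun g => e g + e g⁻¹ + 1, fun g => Nat.succ_pos _, fun g => by simp [add_comm],
    fun n => ((Set.finite_Iic n).preimage he.injOn).subset
      fun g (hg : e g + e g⁻¹ + 1 ≤ n) => show e g ≤ n by omega⟩

/-- Every countable group admits a left-invariant proper metric. -/
theorem stmt4 {G : Type*} [Group G] [Countable G] :
    ∃ d : G → G → ℝ, IsMetricD d ∧ (∀ g x y : G, d (g * x) (g * y) = d x y) ∧
      ∀ B : Set G, IsBoundedD d B → B.Finite := by
  obtain ⟨w, hpos, hinv, hfin⟩ := exists_weight_pos_inv_finite_setOf_le G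
  set N := weightedWordNorm hpos hinv
  refine ⟨fun x y => N (x⁻¹ * y), N.isMetricD_inv_mul, fun g x y => ?_,
    fun B => N.finite_of_isBoundedD_inv_mul (finite_setOf_weightedWordNorm_le hpos hinv hfin)⟩
  simp [mul_assoc]
end

section
/- Let G be a countable group with a left-invariant proper metric. Then the asymptotic dimension of G is 0 if and only if every finitely generated subgroup of G is finite (i.e., G is locally finite). -/
/-- A family of sets is `d`-disjoint: points in distinct members are at distance `> d`. -/
def DDisjointD {X : Type*} (dist : X → X → ℝ) (d : ℝ) (U : Set (Set X)) : Prop :=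
  ∀ A ∈ U, ∀ B ∈ U, A ≠ B → ∀ x ∈ A, ∀ y ∈ B, d < dist x y

/-- A family of sets is `R`-bounded: each member has diameter at most `R`. -/
def BoundedFamD {X : Type*} (dist : X → X → ℝ) (R : ℝ) (U : Set (Set X)) : Prop :=
  ∀ A ∈ U, ∀ x ∈ A, ∀ y ∈ A, dist x y ≤ R

/-- Asymptotic dimension at most `n`: for every `d > 0` there are `n+1` `d`-disjoint
uniformly bounded families of subsets whose union covers the space. -/
def AsdimLE_D {X : Type*} (dist : X → X → ℝ) (n : ℕ) : Prop :=
  ∀ d > (0 : ℝ), ∃ R : ℝ, ∃ U : Fin (n + 1) → Set (Set X),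
    (∀ i, DDisjointD dist d (U i)) ∧ (∀ i, BoundedFamD dist R (U i)) ∧
    ∀ x : X, ∃ i, ∃ A ∈ U i, x ∈ A

private lemma coset_rep_eq {G : Type*} [Group G] (H : Subgroup G) (a x : G)
    (h : a⁻¹ * x ∈ H) : {z | a⁻¹ * z ∈ H} = {z | x⁻¹ * z ∈ H} := by
  ext z
  simp only [Set.mem_setOf_eq]
  constructor
  · intro hz
    have := H.mul_mem (H.inv_mem h) hz
    simpa [mul_assoc] using this
  · intro hz
    have := H.mul_mem h hz
    simpa [mul_assoc] using this

/-- A countable group with a left-invariant proper metric has asymptotic dimension `0`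
iff every finitely generated subgroup is finite. -/
theorem stmt6 {G : Type*} [Group G] [Countable G] (d : G → G → ℝ)
    (hd : IsMetricD d) (hdinv : ∀ g x y : G, d (g * x) (g * y) = d x y)
    (hdprop : ∀ B : Set G, IsBoundedD d B → B.Finite) :
    AsdimLE_D d 0 ↔ ∀ H : Subgroup G, H.FG → (H : Set G).Finite := by
  obtain ⟨hpos, heq, hsymm, htri⟩ := hd
  have hdist : ∀ x y : G, d x y = d 1 (x⁻¹ * y) := by
    intro x y
    have := hdinv x 1 (x⁻¹ * y)
    simpa using this
  constructor
  · -- asdim 0 → locally finite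
    intro hasdim H hFG
    obtain ⟨S, hSclos, hSfin⟩ := (Subgroup.fg_iff H).1 hFG
    obtain ⟨M0, hM0⟩ := (hSfin.image (d 1)).bddAbove
    set M : ℝ := max M0 0 with hM
    have hMnn : (0:ℝ) ≤ M := le_max_right _ _
    have hSle : ∀ s ∈ S, d 1 s ≤ M := fun s hs =>
      le_trans (hM0 (Set.mem_image_of_mem _ hs)) (le_max_left _ _)
    obtain ⟨R, U, hDisj, hBdd, hcov⟩ := hasdim (M + 1) (by linarith)
    obtain ⟨i0, A0, hA0, h1A0⟩ := hcov 1
    -- every product of generators stays in A0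
    have key : ∀ l : List G, (∀ y ∈ l, d 1 y ≤ M) → l.prod ∈ A0 := by
      intro l
      induction l using List.reverseRecOn with
      | nil => intro _; simpa using h1A0
      | append_singleton l s ih =>
        intro hl
        have hx : l.prod ∈ A0 := ih (fun y hy => hl y (by simp [hy]))
        have hs : d 1 s ≤ M := hl s (by simp)
        rw [List.prod_append, List.prod_singleton]
        obtain ⟨j, B, hB, hxs⟩ := hcov (l.prod * s)
        have hj : j = i0 := Fin.ext (by omega)
        rw [hj] at hB
        by_cases hAB : A0 = B
        · rw [hAB]; exact hxs
        · exfalso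
          have hgt := hDisj i0 A0 hA0 B hB hAB l.prod hx (l.prod * s) hxs
          have hdd : d l.prod (l.prod * s) = d 1 s := by
            have := hdinv l.prod 1 s; simpa using this
          linarith
    have hHA0 : (H : Set G) ⊆ A0 := by
      intro h hh
      rw [← hSclos] at hh
      have hh' : h ∈ (Subgroup.closure S).toSubmonoid := hh
      rw [Subgroup.closure_toSubmonoid] at hh'
      obtain ⟨l, hl, hlp⟩ := Submonoid.exists_list_of_mem_closure hh'
      rw [← hlp]
      refine key l (fun y hy => ?_)
      rcases hl y hy with h1 | h1
      · exact hSle y h1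
      · have h1' : y⁻¹ ∈ S := h1
        have : d 1 y = d 1 y⁻¹ := by
          have e1 := hdinv y 1 y⁻¹
          simp only [mul_one, mul_inv_cancel] at e1
          rw [← e1, hsymm]
        rw [this]; exact hSle _ h1'
    exact (hdprop A0 ⟨R, hBdd i0 A0 hA0⟩).subset hHA0
  · -- locally finite → asdim 0
    intro hfin ε hε
    set B : Set G := {g | d 1 g ≤ ε} with hBdef
    have hBbdd : IsBoundedD d B := by
      refine ⟨ε + ε, fun x hx y hy => ?_⟩
      have h1 : d x 1 ≤ ε := by rw [hsymm]; exact hx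
      have h2 : d 1 y ≤ ε := hy
      calc d x y ≤ d x 1 + d 1 y := htri x 1 y
        _ ≤ ε + ε := by linarith
    have hBfin : B.Finite := hdprop B hBbdd
    set H : Subgroup G := Subgroup.closure B with hHdef
    have hHfin : (H : Set G).Finite := hfin H ((Subgroup.fg_iff H).2 ⟨B, rfl, hBfin⟩)
    obtain ⟨R, hR⟩ := (hHfin.image (d 1)).bddAbove
    refine ⟨R, fun _ => {C | ∃ g : G, C = {z | g⁻¹ * z ∈ H}}, ?_, ?_, ?_⟩
    · -- disjoint
      intro i A hA A' hA' hne x hx y hy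
      obtain ⟨a, rfl⟩ := hA
      obtain ⟨b, rfl⟩ := hA'
      by_contra hle
      push_neg at hle
      have hxy : x⁻¹ * y ∈ H := by
        apply Subgroup.subset_closure
        show d 1 (x⁻¹ * y) ≤ ε
        rw [← hdist]; exact hle
      exact hne (by
        rw [coset_rep_eq H a x hx, coset_rep_eq H b y hy]
        exact coset_rep_eq H x y hxy)
    · -- bounded
      intro i A hA x hx y hy
      obtain ⟨g, rfl⟩ := hA
      have hxy : x⁻¹ * y ∈ H := by
        have := H.mul_mem (H.inv_mem hx) hy
        simpa [mul_assoc] using this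
      rw [hdist]
      exact hR (Set.mem_image_of_mem _ hxy)
    · -- cover
      intro x
      exact ⟨0, {z | x⁻¹ * z ∈ H}, ⟨x, rfl⟩, by simpa using H.one_mem⟩
end

section
/- Let G be a group with a left-invariant metric, and suppose for every d>0 there is a d-disjoint uniformly bounded cover of G. Then for every finite subset T of G, the subgroup generated by T is contained in the member of such a cover containing the identity (for any d exceeding max_{t∈T}‖t‖), hence is bounded. -/
/-- If a group with a norm-induced left-invariant metric admits `d`-disjoint uniformly
bounded covers for all `d > 0`, then for any finite `T` and any `d` exceeding the norms
of the elements of `T`, the subgroup generated by `T` is contained in the member of such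
a cover containing the identity, hence is bounded. -/
theorem stmt7 {G : Type*} [Group G] (ν : G → ℝ)
    (hnn : ∀ x, 0 ≤ ν x) (h0 : ∀ x, ν x = 0 ↔ x = 1)
    (hsymm : ∀ x, ν x⁻¹ = ν x) (hsub : ∀ x y, ν (x * y) ≤ ν x + ν y)
    (hcov : ∀ d > (0 : ℝ), ∃ 𝒰 : Set (Set G),
      DDisjointD (fun x y => ν (x⁻¹ * y)) d 𝒰 ∧
      (∃ R, BoundedFamD (fun x y => ν (x⁻¹ * y)) R 𝒰) ∧ ∀ x : G, ∃ A ∈ 𝒰, x ∈ A) :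
    ∀ T : Finset G, ∀ d : ℝ, (∀ t ∈ T, ν t < d) →
      ∀ 𝒰 : Set (Set G), DDisjointD (fun x y => ν (x⁻¹ * y)) d 𝒰 →
        (∃ R, BoundedFamD (fun x y => ν (x⁻¹ * y)) R 𝒰) → (∀ x : G, ∃ A ∈ 𝒰, x ∈ A) →
        ∀ U ∈ 𝒰, (1 : G) ∈ U →
          ((Subgroup.closure (T : Set G) : Set G) ⊆ U ∧
            IsBoundedD (fun x y => ν (x⁻¹ * y))
              (Subgroup.closure (T : Set G) : Set G)) := by
  intro T d hT 𝒰 hdisj ⟨R, hbdd⟩ hcover U hU hone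
  have key : ∀ g ∈ U, ∀ t : G, ν t < d → g * t ∈ U := by
    intro g hg t ht
    obtain ⟨A, hA, hgt⟩ := hcover (g * t)
    by_cases hAU : A = U
    · rwa [hAU] at hgt
    · exfalso
      have := hdisj U hU A hA (Ne.symm hAU) g hg (g * t) hgt
      simp only [inv_mul_cancel_left] at this
      linarith
  have hsub' : (Subgroup.closure (T : Set G) : Set G) ⊆ U := by
    intro x hx
    have hx' : x ∈ Subgroup.closure (T : Set G) := hx
    induction hx' using Subgroup.closure_induction_right with
    | one => exact hone
    | mul_right y hy t htT ih => exact key y (ih hy) t (hT t htT)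
    | mul_inv_cancel y hy t htT ih =>
        exact key y (ih hy) t⁻¹ (by rw [hsymm]; exact hT t htT)
  exact ⟨hsub', R, fun x hx y hy => hbdd U hU x (hsub' hx) y (hsub' hy)⟩
end

section
/- A countable abelian group with a left-invariant proper metric has asymptotic dimension 0 if and only if it is a torsion group. -/
/-- A countable abelian group with a left-invariant proper metric has asymptotic
dimension `0` iff it is a torsion group. -/
theorem stmt10 {G : Type*} [CommGroup G] [Countable G] (d : G → G → ℝ)
    (hd : IsMetricD d) (hdinv : ∀ g x y : G, d (g * x) (g * y) = d x y)
    (hdprop : ∀ B : Set G, IsBoundedD d B → B.Finite) :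
    AsdimLE_D d 0 ↔ ∀ g : G, ∃ n : ℕ, 0 < n ∧ g ^ n = 1 := by
  obtain ⟨hpos, heq, hsymm, htri⟩ := hd
  have hinv1 : ∀ a b : G, d a b = d 1 (a⁻¹ * b) := by
    intro a b
    have := hdinv a 1 (a⁻¹ * b)
    simpa using this
  constructor
  · intro h g
    by_cases hg : g = 1
    · exact ⟨1, one_pos, by simp [hg]⟩
    · have hδ : 0 < d 1 g := by
        rcases lt_or_eq_of_le (hpos 1 g) with h' | h'
        · exact h'
        · exact absurd ((heq 1 g).mp h'.symm).symm hg
      obtain ⟨R, U, hdis, hbd, hcov⟩ := h (d 1 g) hδ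
      obtain ⟨i, A, hA, h1A⟩ := hcov 1
      have hi : i = 0 := Fin.eq_zero i
      rw [hi] at hA
      have hall : ∀ n : ℕ, g ^ n ∈ A := by
        intro n
        induction n with
        | zero => simpa using h1A
        | succ n ih =>
          obtain ⟨j, B, hB, hgB⟩ := hcov (g ^ (n + 1))
          have hj : j = 0 := Fin.eq_zero j
          rw [hj] at hB
          by_cases hAB : B = A
          · rw [hAB] at hgB; exact hgB
          · exfalso
            have := hdis 0 A hA B hB (Ne.symm hAB) (g ^ n) ih (g ^ (n + 1)) hgB
            have hdd : d (g ^ n) (g ^ (n + 1)) = d 1 g := by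
              have := hdinv (g ^ n) 1 g
              simpa [pow_succ] using this
            rw [hdd] at this
            exact lt_irrefl _ this
      have hAfin : A.Finite := hdprop A ⟨R, hbd 0 A hA⟩
      have hSfin : (Set.range fun n : ℕ => g ^ n).Finite :=
        hAfin.subset (by rintro _ ⟨n, rfl⟩; exact hall n)
      have : ¬ Function.Injective (fun n : ℕ => g ^ n) := by
        intro hinj
        exact Set.infinite_range_of_injective hinj hSfin
      rw [Function.not_injective_iff] at this
      obtain ⟨m, k, hmk, hne⟩ := this
      rcases lt_or_gt_of_ne hne with hlt | hlt
      · refine ⟨k - m, Nat.sub_pos_of_lt hlt, ?_⟩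
        have : g ^ k = g ^ m := hmk.symm
        rw [← Nat.sub_add_cancel hlt.le, pow_add] at this
        exact mul_left_cancel (a := g ^ m) (by rw [mul_comm] at this ⊢; simpa using this)
      · refine ⟨m - k, Nat.sub_pos_of_lt hlt, ?_⟩
        have : g ^ m = g ^ k := hmk
        rw [← Nat.sub_add_cancel hlt.le, pow_add] at this
        exact mul_left_cancel (a := g ^ k) (by rw [mul_comm] at this ⊢; simpa using this)
  · intro htor δ hδ
    set B₀ : Set G := {x | d 1 x ≤ δ} with hB₀
    have hB₀fin : B₀.Finite := by
      apply hdprop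
      refine ⟨δ + δ, ?_⟩
      intro x hx y hy
      calc d x y ≤ d x 1 + d 1 y := htri x 1 y
        _ ≤ δ + δ := add_le_add (by rw [hsymm]; exact hx) hy
    set H : Subgroup G := Subgroup.closure B₀ with hH
    have hHfg : Group.FG ↥H := by
      rw [Group.fg_iff_subgroup_fg]
      exact (Subgroup.fg_iff H).mpr ⟨B₀, rfl, hB₀fin⟩
    have hHtor : Monoid.IsTorsion ↥H := by
      intro h
      obtain ⟨n, hn, hgn⟩ := htor (h : G)
      exact isOfFinOrder_iff_pow_eq_one.mpr ⟨n, hn, by ext; push_cast [hgn]; simp [hgn]⟩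
    have hHfin : Finite ↥H := @CommGroup.finite_of_fg_torsion _ _ hHfg hHtor
    have hHSfin : (H : Set G).Finite := (H : Set G).toFinite
    -- bound on diameter of H
    have him : (Set.image2 d (H : Set G) (H : Set G)).Finite := hHSfin.image2 d hHSfin
    obtain ⟨R, hR⟩ := him.bddAbove
    -- the family of cosets
    set U : Set (Set G) := {A | ∃ x : G, A = {y | x⁻¹ * y ∈ H}} with hU
    refine ⟨R, fun _ => U, ?_, ?_, ?_⟩
    · intro _
      rintro A ⟨x, rfl⟩ B ⟨y, rfl⟩ hne a ha b hb
      by_contra hle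
      push_neg at hle
      apply hne
      have hab : a⁻¹ * b ∈ H := by
        apply Subgroup.subset_closure
        show d 1 (a⁻¹ * b) ≤ δ
        rw [← hinv1]; exact hle
      have hcoset : ∀ u v : G, u⁻¹ * v ∈ H → {z | u⁻¹ * z ∈ H} = {z | v⁻¹ * z ∈ H} := by
        intro u v huv
        ext z
        constructor
        · intro hz
          have : v⁻¹ * z = (u⁻¹ * v)⁻¹ * (u⁻¹ * z) := by group
          rw [Set.mem_setOf_eq, this]
          exact H.mul_mem (H.inv_mem huv) hz
        · intro hz
          have : u⁻¹ * z = (u⁻¹ * v) * (v⁻¹ * z) := by group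
          rw [Set.mem_setOf_eq, this]
          exact H.mul_mem huv hz
      calc {z | x⁻¹ * z ∈ H} = {z | a⁻¹ * z ∈ H} := hcoset x a ha
        _ = {z | b⁻¹ * z ∈ H} := hcoset a b hab
        _ = {z | y⁻¹ * z ∈ H} := (hcoset y b hb).symm
    · intro _
      rintro A ⟨x, rfl⟩ a ha b hb
      have : d a b = d (x⁻¹ * a) (x⁻¹ * b) := by
        have := hdinv x (x⁻¹ * a) (x⁻¹ * b)
        simpa using this
      rw [this]
      exact hR (Set.mem_image2_of_mem ha hb)
    · intro x
      exact ⟨0, {y | x⁻¹ * y ∈ H}, ⟨x, rfl⟩, by simpa using H.one_mem⟩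
end

section
/- If φ : G → H is a surjective homomorphism of countable groups, each given a left-invariant proper metric, and asdim G = 0, then asdim H = 0. -/
lemma fg_finite_of_asdim0 {G : Type*} [Group G]
    (dG : G → G → ℝ) (hG : IsMetricD dG)
    (hGinv : ∀ g x y : G, dG (g * x) (g * y) = dG x y)
    (hGprop : ∀ B : Set G, IsBoundedD dG B → B.Finite)
    (hA : AsdimLE_D dG 0) (S : Set G) (hS : S.Finite) :
    (Subgroup.closure S : Set G).Finite := by
  obtain ⟨hnn, heq, hsymm, htri⟩ := hG
  -- distance from 1 to inverse equals distance to element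
  have hinv1 : ∀ x : G, dG 1 x⁻¹ = dG 1 x := by
    intro x
    have h1 := hGinv x 1 x⁻¹
    simp only [mul_one, mul_inv_cancel] at h1
    rw [← h1, hsymm]
  obtain ⟨M, hM⟩ := (hS.image (fun s => dG 1 s)).bddAbove
  have hMS : ∀ s ∈ S, dG 1 s ≤ M := fun s hs => hM ⟨s, hs, rfl⟩
  set d : ℝ := max M 0 + 1 with hd
  have hdpos : 0 < d := by positivity
  obtain ⟨R, U, hdisj, hbdd, hcov⟩ := hA d hdpos
  obtain ⟨i, A, hAU, h1A⟩ := hcov 1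
  have key : ∀ l : List G, (∀ x ∈ l, x ∈ S ∪ S⁻¹) → l.prod ∈ A := by
    intro l
    induction l using List.reverseRecOn with
    | nil => intro _; simpa using h1A
    | append_singleton t x ih =>
      intro hl
      have ht : t.prod ∈ A := ih (fun y hy => hl y (by simp [hy]))
      have hx : x ∈ S ∪ S⁻¹ := hl x (by simp)
      have hx1 : dG 1 x ≤ M := by
        rcases hx with h | h
        · exact hMS x h
        · rw [← hinv1]; exact hMS x⁻¹ h
      have hdist : dG t.prod (t.prod * x) < d := by
        have h2 : dG (t.prod * 1) (t.prod * x) = dG 1 x := hGinv t.prod 1 x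
        rw [mul_one] at h2
        rw [h2]
        have := le_max_left M (0:ℝ)
        linarith
      obtain ⟨j, B, hBU, hxB⟩ := hcov (t.prod * x)
      have hji : j = i := Fin.fin_one_eq_zero j |>.trans (Fin.fin_one_eq_zero i).symm
      subst hji
      by_cases hAB : A = B
      · rw [List.prod_append, List.prod_singleton, hAB]; exact hxB
      · exfalso
        have := hdisj j A hAU B hBU hAB t.prod ht (t.prod * x) hxB
        linarith
  have hsub : (Subgroup.closure S : Set G) ⊆ A := by
    intro g hg
    have hg' : g ∈ (Subgroup.closure S).toSubmonoid := hg
    rw [Subgroup.closure_toSubmonoid] at hg'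
    obtain ⟨l, hl, hprod⟩ := Submonoid.exists_list_of_mem_closure hg'
    rw [← hprod]
    exact key l hl
  have hAbdd : IsBoundedD dG A := ⟨R, fun x hx y hy => hbdd i A hAU x hx y hy⟩
  exact (hGprop A hAbdd).subset hsub

/-- The image of a countable group of asymptotic dimension `0` under an epimorphism has
asymptotic dimension `0`. -/
theorem stmt11 {G H : Type*} [Group G] [Group H] [Countable G] [Countable H]
    (φ : G →* H) (hφ : Function.Surjective φ)
    (dG : G → G → ℝ) (dH : H → H → ℝ)
    (hG : IsMetricD dG) (hGinv : ∀ g x y : G, dG (g * x) (g * y) = dG x y)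
    (hGprop : ∀ B : Set G, IsBoundedD dG B → B.Finite)
    (hH : IsMetricD dH) (hHinv : ∀ g x y : H, dH (g * x) (g * y) = dH x y)
    (hHprop : ∀ B : Set H, IsBoundedD dH B → B.Finite) :
    AsdimLE_D dG 0 → AsdimLE_D dH 0 := by
  intro hA
  obtain ⟨hnn, heq, hsymm, htri⟩ := hH
  intro d hd
  -- the closed ball of radius d in H
  set T : Set H := {h | dH 1 h ≤ d} with hT
  have hTbdd : IsBoundedD dH T := by
    refine ⟨d + d, fun x hx y hy => ?_⟩
    have := htri x 1 y
    have hx1 : dH x 1 = dH 1 x := hsymm x 1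
    simp only [hT, Set.mem_setOf_eq] at hx hy
    linarith
  have hTfin : T.Finite := hHprop T hTbdd
  -- lift T to G
  set σ : H → G := Function.surjInv hφ with hσ
  have hσφ : ∀ h, φ (σ h) = h := fun h => Function.surjInv_eq hφ h
  -- the subgroup of H generated by T is finite
  set L : Subgroup H := Subgroup.closure T with hL
  have hLfin : (L : Set H).Finite := by
    have hKfin : (Subgroup.closure (σ '' T) : Set G).Finite :=
      fg_finite_of_asdim0 dG hG hGinv hGprop hA (σ '' T) (hTfin.image σ)
    have hmap : Subgroup.map φ (Subgroup.closure (σ '' T)) = L := by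
      rw [MonoidHom.map_closure]
      congr 1
      rw [Set.image_image]
      simp only [hσφ, Set.image_id']
    have : (L : Set H) = φ '' (Subgroup.closure (σ '' T) : Set G) := by
      rw [← hmap]; rfl
    rw [this]
    exact hKfin.image φ
  -- L is bounded
  obtain ⟨C, hC⟩ : ∃ C : ℝ, ∀ x ∈ (L : Set H), ∀ y ∈ (L : Set H), dH x y ≤ C := by
    obtain ⟨C, hC⟩ := (((hLfin.prod hLfin)).image (fun p => dH p.1 p.2)).bddAbove
    exact ⟨C, fun x hx y hy => hC ⟨(x, y), Set.mk_mem_prod hx hy, rfl⟩⟩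
  -- cover H by left cosets of L
  refine ⟨C, fun _ => Set.range (fun h : H => {y | h⁻¹ * y ∈ L}), ?_, ?_, ?_⟩
  · -- d-disjoint
    rintro i A ⟨a, rfl⟩ B ⟨b, rfl⟩ hAB x hx y hy
    by_contra hcon
    push_neg at hcon
    have hxy : x⁻¹ * y ∈ L := by
      have h1 : dH (x * 1) (x * (x⁻¹ * y)) = dH 1 (x⁻¹ * y) := hHinv x 1 (x⁻¹ * y)
      have h2 : x * (x⁻¹ * y) = y := by group
      rw [mul_one, h2] at h1
      have : x⁻¹ * y ∈ T := by
        simp only [hT, Set.mem_setOf_eq, ← h1]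
        exact hcon
      exact Subgroup.subset_closure this
    simp only [Set.mem_setOf_eq] at hx hy
    have hba : b⁻¹ * a ∈ L := by
      have : (b⁻¹ * y) * (x⁻¹ * y)⁻¹ * (a⁻¹ * x)⁻¹ = b⁻¹ * a := by group
      rw [← this]
      exact mul_mem (mul_mem hy (inv_mem hxy)) (inv_mem hx)
    apply hAB
    ext z
    simp only [Set.mem_setOf_eq]
    constructor
    · intro hz
      have : (b⁻¹ * a) * (a⁻¹ * z) = b⁻¹ * z := by group
      rw [← this]; exact mul_mem hba hz
    · intro hz
      have : (b⁻¹ * a)⁻¹ * (b⁻¹ * z) = a⁻¹ * z := by group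
      rw [← this]; exact mul_mem (inv_mem hba) hz
  · -- bounded
    rintro i A ⟨a, rfl⟩ x hx y hy
    simp only [Set.mem_setOf_eq] at hx hy
    have h1 : dH (a * (a⁻¹ * x)) (a * (a⁻¹ * y)) = dH (a⁻¹ * x) (a⁻¹ * y) :=
      hHinv a (a⁻¹ * x) (a⁻¹ * y)
    have h2 : a * (a⁻¹ * x) = x := by group
    have h3 : a * (a⁻¹ * y) = y := by group
    rw [h2, h3] at h1
    rw [h1]
    exact hC _ hx _ hy
  · -- cover
    intro x
    exact ⟨0, {y | x⁻¹ * y ∈ L}, ⟨x, rfl⟩, by simpa using one_mem L⟩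
end

section
/- The function ‖m/n‖_ℚ = |m/n| + ln(n), defined for rationals m/n in lowest terms with n > 0, is a proper norm on the additive group ℚ: ‖x‖_ℚ = 0 iff x = 0, ‖−x‖_ℚ = ‖x‖_ℚ, ‖x+y‖_ℚ ≤ ‖x‖_ℚ + ‖y‖_ℚ, and {x : ‖x‖_ℚ ≤ R} is finite for every R. -/
/-- The norm `‖m/n‖ = |m/n| + ln n` on `ℚ`, for `m/n` in standard form. -/
noncomputable def qNorm (q : ℚ) : ℝ := |(q : ℝ)| + Real.log q.den

/-- The left-invariant metric on `ℚ` induced by `qNorm`. -/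
noncomputable def qDist (x y : ℚ) : ℝ := qNorm (y - x)

lemma qNorm_nonneg (x : ℚ) : 0 ≤ qNorm x := by
  have h1 : (0:ℝ) ≤ Real.log x.den :=
    Real.log_nonneg (by exact_mod_cast x.pos)
  have := abs_nonneg ((x:ℝ))
  unfold qNorm; linarith

/-- `qNorm` is a proper norm on the additive group `ℚ`. -/
theorem stmt12 :
    (∀ x : ℚ, 0 ≤ qNorm x) ∧
    (∀ x : ℚ, qNorm x = 0 ↔ x = 0) ∧
    (∀ x : ℚ, qNorm (-x) = qNorm x) ∧
    (∀ x y : ℚ, qNorm (x + y) ≤ qNorm x + qNorm y) ∧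
    ∀ R : ℝ, {x : ℚ | qNorm x ≤ R}.Finite := by
  refine ⟨qNorm_nonneg, ?_, ?_, ?_, ?_⟩
  · intro x
    constructor
    · intro h
      have h1 : (0:ℝ) ≤ Real.log x.den :=
        Real.log_nonneg (by exact_mod_cast x.pos)
      have h2 := abs_nonneg ((x:ℝ))
      have hx : |(x:ℝ)| = 0 := by unfold qNorm at h; linarith
      have : (x:ℝ) = 0 := abs_eq_zero.mp hx
      exact_mod_cast this
    · rintro rfl; simp [qNorm]
  · intro x; simp [qNorm]
  · intro x y
    unfold qNorm
    have h1 : |((x+y : ℚ):ℝ)| ≤ |(x:ℝ)| + |(y:ℝ)| := by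
      push_cast; exact abs_add_le _ _
    have h2 : Real.log (x+y).den ≤ Real.log x.den + Real.log y.den := by
      rw [← Real.log_mul (by exact_mod_cast x.pos.ne') (by exact_mod_cast y.pos.ne')]
      apply Real.log_le_log (by exact_mod_cast (x+y).pos)
      have := Nat.le_of_dvd (Nat.mul_pos x.pos y.pos) (Rat.add_den_dvd x y)
      exact_mod_cast this
    linarith
  · intro R
    have key : ∀ M D : ℤ, {x : ℚ | qNorm x ≤ R} ⊆
        (fun x : ℚ => (x.num, (x.den : ℤ))) ⁻¹' (Set.Icc (-M) M ×ˢ Set.Icc 0 D) →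
        {x : ℚ | qNorm x ≤ R}.Finite := by
      intro M D hsub
      apply Set.Finite.subset (Set.Finite.preimage ?_ ((Set.finite_Icc (-M) M).prod (Set.finite_Icc 0 D))) hsub
      intro a _ b _ hab
      simp only [Prod.mk.injEq] at hab
      exact Rat.ext hab.1 (by exact_mod_cast hab.2)
    set M : ℤ := ⌈R * Real.exp R⌉
    set D : ℤ := ⌈Real.exp R⌉
    apply key M D
    intro x hx
    simp only [Set.mem_setOf_eq] at hx
    have hlog : (0:ℝ) ≤ Real.log x.den := Real.log_nonneg (by exact_mod_cast x.pos)
    have habs : (0:ℝ) ≤ |(x:ℝ)| := abs_nonneg _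
    unfold qNorm at hx
    have hR : 0 ≤ R := le_trans (by linarith) hx
    have hxabs : |(x:ℝ)| ≤ R := by linarith
    have hden : (x.den : ℝ) ≤ Real.exp R := by
      calc (x.den : ℝ) = Real.exp (Real.log x.den) :=
            (Real.exp_log (by exact_mod_cast x.pos)).symm
        _ ≤ Real.exp R := Real.exp_le_exp.mpr (by linarith)
    have hnum : |(x.num : ℝ)| ≤ R * Real.exp R := by
      have hcast : (x:ℝ) = (x.num : ℝ) / (x.den : ℝ) := by
        rw [Rat.cast_def]
      have hdpos : (0:ℝ) < x.den := by exact_mod_cast x.pos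
      have : |(x.num : ℝ)| = |(x:ℝ)| * x.den := by
        rw [hcast, abs_div, abs_of_pos hdpos]
        field_simp
      rw [this]
      exact mul_le_mul hxabs hden hdpos.le hR
    constructor
    · rw [Set.mem_Icc]
      have h1 : (x.num : ℝ) ≤ M := le_trans (le_trans (le_abs_self _) hnum) (Int.le_ceil _)
      have h2 : (-M : ℝ) ≤ x.num := by
        have := neg_abs_le ((x.num:ℝ))
        have := Int.le_ceil (R * Real.exp R)
        linarith
      exact ⟨by exact_mod_cast h2, by exact_mod_cast h1⟩
    · rw [Set.mem_Icc]
      have h1 : (x.den : ℝ) ≤ D := le_trans hden (Int.le_ceil _)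
      exact ⟨by positivity, by exact_mod_cast h1⟩
end

section
/- Let ‖x̄‖ = inf { ‖x+k‖_ℚ : k ∈ ℤ } be the quotient norm on ℚ/ℤ, where ‖m/n‖_ℚ = |m/n| + ln(n) in standard form. Then for every rational m/n in standard form with −1 < m/n < 1, ‖\overline{m/n}‖ ≥ ln(n) ≥ (1/3)‖m/n‖_ℚ. -/
lemma den_add_int (x : ℚ) (k : ℤ) : (x + k).den = x.den := by
  have hd : (0:ℤ) < (x.den : ℤ) := by exact_mod_cast x.pos
  have hcop : IsCoprime (x.num + k * (x.den:ℤ)) (x.den:ℤ) := by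
    have : IsCoprime x.num (x.den:ℤ) := Int.isCoprime_iff_gcd_eq_one.mpr x.reduced
    simpa [mul_comm] using this.add_mul_left_left k
  have hcop' : Nat.Coprime (x.num + k * (x.den:ℤ)).natAbs ((x.den:ℤ)).natAbs :=
    Int.isCoprime_iff_gcd_eq_one.mp hcop
  have hx : x + (k:ℚ) = ((x.num + k * (x.den:ℤ) : ℤ) : ℚ) / ((x.den:ℤ) : ℚ) := by
    push_cast
    rw [add_div, mul_div_assoc, div_self (by exact_mod_cast x.den_nz : ((x.den:ℚ)) ≠ 0),
      Rat.num_div_den, mul_one]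
  have := Rat.den_div_eq_of_coprime hd hcop'
  rw [hx]
  exact_mod_cast this

/-- For a rational `x ∈ (-1,1)` with denominator `n`, the quotient norm of its class in
`ℚ/ℤ` satisfies `‖x̄‖ ≥ ln n ≥ (1/3)‖x‖_ℚ`. -/
theorem stmt14 (x : ℚ) (h1 : -1 < x) (h2 : x < 1) :
    Real.log x.den ≤ sInf {c : ℝ | ∃ k : ℤ, c = qNorm (x + k)} ∧
    (1 / 3) * qNorm x ≤ Real.log x.den := by
  constructor
  · refine le_csInf ⟨qNorm (x + (0:ℤ)), ⟨0, rfl⟩⟩ ?_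
    rintro c ⟨k, rfl⟩
    rw [qNorm, den_add_int]
    have := abs_nonneg ((x + (k:ℚ) : ℚ) : ℝ)
    linarith
  · rw [qNorm]
    rcases eq_or_lt_of_le (Nat.one_le_iff_ne_zero.mpr x.den_nz) with h | h
    · have hnum : (x.num : ℚ) = x := Rat.coe_int_num_of_den_eq_one h.symm
      have hn1 : -1 < x.num := by exact_mod_cast hnum ▸ h1
      have hn2 : x.num < 1 := by exact_mod_cast hnum ▸ h2
      have : x.num = 0 := by omega
      have hx0 : x = 0 := by rw [← hnum, this]; norm_num
      simp [hx0]
    · have hlog : Real.log 2 ≤ Real.log x.den := by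
        apply Real.log_le_log (by norm_num)
        exact_mod_cast (h : 2 ≤ x.den)
      have habs : |(x:ℝ)| ≤ 1 := by
        rw [abs_le]
        constructor
        · exact_mod_cast h1.le
        · exact_mod_cast h2.le
      have h2log : (1:ℝ) ≤ 2 * Real.log 2 := by
        have := Real.log_two_gt_d9
        linarith
      nlinarith [Real.log_nonneg (by exact_mod_cast Nat.one_le_iff_ne_zero.mpr x.den_nz : (1:ℝ) ≤ x.den)]
end

section
/- The rationals ℚ with the proper invariant metric induced by the norm ‖m/n‖_ℚ = |m/n| + ln(n) (m/n in standard form) have asymptotic dimension exactly 1. -/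
/-!
Upper bound: fix a scale `d` and put `M = N!` with `N = ⌈exp d⌉₊`. If `(y - x).den` does not
divide `M` then it exceeds `N`, so `qDist x y ≥ log (y - x).den > d`; hence the cosets of
`(1/M)ℤ` are pairwise `d`-far apart, while within a coset the logarithmic term is at most
`log M`. Cutting each coset into blocks of length `L > d` and colouring the blocks by the
parity of their index gives two `d`-disjoint families of sets of diameter at most `L + log M`.

Lower bound: on `ℤ ⊆ ℚ` the metric is `|b - a|`, so the integers form a chain of `1`-steps
whose ends are arbitrarily far apart, which no `1`-disjoint bounded family can cover.
-/

section AsymptoticDimension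

variable {X : Type*} (dist : X → X → ℝ)

theorem exists_cover_of_classes_of_blocks {ι : Type*} {d R : ℝ} (cls : X → ι) (blk : X → ℤ)
    (hcls : ∀ x y, cls x ≠ cls y → d < dist x y)
    (hblk : ∀ x y, 2 ≤ |blk x - blk y| → d < dist x y)
    (hR : ∀ x y, cls x = cls y → blk x = blk y → dist x y ≤ R) :
    ∃ U : Fin 2 → Set (Set X), (∀ i, DDisjointD dist d (U i)) ∧
      (∀ i, BoundedFamD dist R (U i)) ∧ ∀ x, ∃ i, ∃ A ∈ U i, x ∈ A := by
  refine ⟨fun i => {A | ∃ c k, k % 2 = (i : ℤ) ∧ A = {x | cls x = c ∧ blk x = k}}, ?_, ?_, ?_⟩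
  · rintro i _ ⟨c, k, hk, rfl⟩ _ ⟨c', k', hk', rfl⟩ hne x ⟨rfl, rfl⟩ y ⟨rfl, rfl⟩
    by_cases hc : cls x = cls y
    · have hblk_ne : blk x ≠ blk y := fun h => hne (by rw [hc, h])
      exact hblk x y (le_abs.2 (by omega))
    · exact hcls x y hc
  · rintro i _ ⟨c, k, -, rfl⟩ x ⟨rfl, rfl⟩ y ⟨hc, hk⟩
    exact hR x y hc.symm hk.symm
  · intro x
    rcases Int.emod_two_eq (blk x) with h | h
    · exact ⟨0, _, ⟨cls x, blk x, h, rfl⟩, rfl, rfl⟩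
    · exact ⟨1, _, ⟨cls x, blk x, h, rfl⟩, rfl, rfl⟩

theorem not_asdimLE_zero_of_chain (f : ℕ → X) (hstep : ∀ n, dist (f (n + 1)) (f n) ≤ 1)
    (hunbdd : ∀ R, ∃ n, R < dist (f 0) (f n)) : ¬ AsdimLE_D dist 0 := by
  intro h
  obtain ⟨R, U, hdisj, hbdd, hcov⟩ := h 1 one_pos
  have hmem : ∀ n, ∃ A ∈ U 0, f n ∈ A := fun n => by
    obtain ⟨i, hi⟩ := hcov (f n)
    obtain rfl : i = 0 := Subsingleton.elim (α := Fin 1) _ _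
    exact hi
  choose A hAU hfA using hmem
  have hA : ∀ n, A n = A 0 := by
    intro n
    induction n with
    | zero => rfl
    | succ n ih =>
      by_contra hne
      have := hdisj 0 _ (hAU (n + 1)) _ (hAU n) (ih ▸ hne) _ (hfA (n + 1)) _ (hfA n)
      linarith [hstep n]
  obtain ⟨n, hn⟩ := hunbdd R
  exact hn.not_ge (hbdd 0 _ (hAU 0) _ (hfA 0) _ (hA n ▸ hfA n))

end AsymptoticDimension

section FloorBlocks

variable {K : Type*} [Field K] [LinearOrder K] [IsStrictOrderedRing K] [FloorRing K] {L x y : K}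

theorem abs_sub_lt_of_floor_div_eq (hL : 0 < L) (h : ⌊x / L⌋ = ⌊y / L⌋) : |x - y| < L := by
  have := Int.abs_sub_lt_one_of_floor_eq_floor h
  rwa [← sub_div, abs_div, abs_of_pos hL, div_lt_one hL] at this

theorem lt_abs_sub_of_two_le_abs_floor_div_sub (hL : 0 < L)
    (h : 2 ≤ |⌊x / L⌋ - ⌊y / L⌋|) : L < |x - y| := by
  wlog hyx : ⌊y / L⌋ ≤ ⌊x / L⌋ generalizing x y
  · rw [abs_sub_comm]
    exact this (by rwa [abs_sub_comm]) (le_of_not_ge hyx)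
  have h2 : (2 : K) ≤ ⌊x / L⌋ - ⌊y / L⌋ := by
    exact_mod_cast (abs_of_nonneg (sub_nonneg.2 hyx)) ▸ h
  have h1 : 1 < x / L - y / L := by
    linarith [Int.floor_le (x / L), Int.lt_floor_add_one (y / L)]
  rw [← sub_div, one_lt_div hL] at h1
  exact h1.trans_le (le_abs_self _)

end FloorBlocks

theorem Rat.den_dvd_iff_exists_mul_eq_intCast {q : ℚ} {n : ℕ} :
    q.den ∣ n ↔ ∃ z : ℤ, q * n = z := by
  constructor
  · rintro ⟨t, rfl⟩
    exact ⟨q.num * t, by push_cast; rw [← mul_assoc, Rat.mul_den_eq_num]⟩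
  · rintro ⟨z, hz⟩
    rcases eq_or_ne n 0 with rfl | hn
    · exact dvd_zero _
    have hq : q = Rat.divInt z n := by
      rw [Rat.divInt_eq_div, ← hz]
      push_cast
      field_simp
    exact Int.natCast_dvd_natCast.1 (hq ▸ Rat.den_dvd z n)

theorem qDist_eq (x y : ℚ) : qDist x y = |(y : ℝ) - x| + Real.log (y - x).den := by
  simp [qDist, qNorm]

theorem abs_sub_le_qDist (x y : ℚ) : |(y : ℝ) - x| ≤ qDist x y := by
  rw [qDist_eq]
  exact le_add_of_nonneg_right (Real.log_natCast_nonneg _)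

theorem log_den_le_qDist (x y : ℚ) : Real.log (y - x).den ≤ qDist x y := by
  rw [qDist_eq]
  exact le_add_of_nonneg_left (abs_nonneg _)

theorem qDist_intCast (a b : ℤ) : qDist a b = |(b : ℝ) - a| := by
  rw [qDist_eq, ← Int.cast_sub, Rat.den_intCast]
  simp

theorem lt_log_den_of_not_dvd_factorial {q : ℚ} {d : ℝ}
    (h : ¬ q.den ∣ Nat.factorial ⌈Real.exp d⌉₊) : d < Real.log q.den := by
  have hN : ⌈Real.exp d⌉₊ < q.den := by
    by_contra! hle
    exact h (Nat.dvd_factorial q.pos hle)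
  rw [Real.lt_log_iff_exp_lt (by positivity)]
  exact (Nat.le_ceil _).trans_lt (by exact_mod_cast hN)

theorem asdimLE_one_qDist : AsdimLE_D qDist 1 := by
  intro d _
  set M := Nat.factorial ⌈Real.exp d⌉₊
  set L : ℚ := ⌈d⌉₊ + 1
  have hL : 0 < L := by positivity
  have hdL : d < L := by
    push_cast [L]
    linarith [Nat.le_ceil d]
  refine ⟨L + Real.log M, exists_cover_of_classes_of_blocks qDist
    (fun q => Int.fract (q * M)) (fun q => ⌊q / L⌋) ?_ ?_ ?_⟩
  · intro x y hxy
    refine (lt_log_den_of_not_dvd_factorial fun hdvd => hxy ?_).trans_le (log_den_le_qDist x y)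
    obtain ⟨z, hz⟩ := Rat.den_dvd_iff_exists_mul_eq_intCast.1 hdvd
    exact Int.fract_eq_fract.2 ⟨-z, by push_cast; linear_combination -hz⟩
  · intro x y hxy
    calc d < L := hdL
      _ < |(y : ℝ) - x| := by
        rw [abs_sub_comm]
        exact_mod_cast lt_abs_sub_of_two_le_abs_floor_div_sub hL hxy
      _ ≤ qDist x y := abs_sub_le_qDist x y
  · intro x y hcls hblk
    obtain ⟨z, hz⟩ := Int.fract_eq_fract.1 hcls
    have hdvd : (y - x).den ∣ M :=
      Rat.den_dvd_iff_exists_mul_eq_intCast.2 ⟨-z, by push_cast; linear_combination -hz⟩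
    have habs : |(y : ℝ) - x| ≤ L := by
      rw [abs_sub_comm]
      exact_mod_cast (abs_sub_lt_of_floor_div_eq hL hblk).le
    rw [qDist_eq]
    exact add_le_add habs (Real.log_le_log (by exact_mod_cast (y - x).pos)
      (by exact_mod_cast Nat.le_of_dvd (Nat.factorial_pos _) hdvd))

theorem not_asdimLE_zero_qDist : ¬ AsdimLE_D qDist 0 := by
  refine not_asdimLE_zero_of_chain qDist (fun n : ℕ => ((n : ℤ) : ℚ)) (fun n => ?_) (fun R => ?_)
  · rw [qDist_intCast]
    norm_num
  · refine ⟨⌈R⌉₊ + 1, ?_⟩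
    rw [qDist_intCast]
    push_cast
    rw [sub_zero, abs_of_nonneg (by positivity)]
    linarith [Nat.le_ceil R]

/-- `ℚ` with the proper invariant metric induced by `qNorm` has asymptotic dimension
exactly `1`. -/
theorem stmt17 : AsdimLE_D qDist 1 ∧ ¬ AsdimLE_D qDist 0 :=
  ⟨asdimLE_one_qDist, not_asdimLE_zero_qDist⟩
end

section
/- On X = { m/p^a : m ∈ ℤ, a ∈ ℕ } ∩ [0,1), the metrics d_p (from the p-adic norm) and d_ℚ (from ‖m/n‖_ℚ = |m/n| + ln n) satisfy ln(d_p(x,y)) ≤ d_ℚ(x,y) ≤ 3 ln(d_p(x,y)) for all distinct x,y ∈ X; hence the identity map id : (X, d_ℚ) → (X, d_p) is a coarse equivalence, and consequently asdim(ℚ, ‖·‖_p) = 0. -/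
private lemma padicNorm_eq_den19 {p : ℕ} (hp : p.Prime) {r : ℚ} (hr : r ≠ 0) {k : ℕ}
    (hk : r.den = p ^ k) (h1 : r.den ≠ 1) : padicNorm p r = (r.den : ℚ) := by
  have hk0 : k ≠ 0 := by rintro rfl; simp at hk; exact h1 hk
  have hpd : p ∣ r.den := hk ▸ dvd_pow_self p hk0
  have hnum : ¬ (p : ℤ) ∣ r.num := by
    intro h
    have h2 : p ∣ r.num.natAbs := Int.natCast_dvd.mp h
    have := Nat.dvd_gcd h2 hpd
    rw [r.reduced] at this
    exact hp.one_lt.ne' (Nat.dvd_one.mp this)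
  have hv : padicValRat p r = -(k : ℤ) := by
    rw [padicValRat_def, padicValInt.eq_zero_of_not_dvd hnum, hk,
      padicValNat.prime_pow (hp := ⟨hp⟩)]
    simp
  rw [padicNorm.eq_zpow_of_nonzero hr, hv, neg_neg, hk]
  push_cast
  rw [zpow_natCast]

private lemma aux_main19 {p : ℕ} (hp : p.Prime) {x y : ℚ}
    (hx : ∃ m : ℤ, ∃ a : ℕ, x = (m : ℚ) / (p : ℚ) ^ a)
    (hy : ∃ m : ℤ, ∃ a : ℕ, y = (m : ℚ) / (p : ℚ) ^ a)
    (hx0 : 0 ≤ x) (hx1 : x < 1) (hy0 : 0 ≤ y) (hy1 : y < 1) (hne : x ≠ y) :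
    (2 : ℝ) ≤ ((padicNorm p (y - x) : ℚ) : ℝ) ∧
    Real.log ((padicNorm p (y - x) : ℚ) : ℝ) ≤ qDist x y ∧
    qDist x y ≤ 3 * Real.log ((padicNorm p (y - x) : ℚ) : ℝ) := by
  obtain ⟨m, a, rfl⟩ := hx
  obtain ⟨m', b, rfl⟩ := hy
  set x : ℚ := (m : ℚ) / (p : ℚ) ^ a with hxd
  set y : ℚ := (m' : ℚ) / (p : ℚ) ^ b with hyd
  set r : ℚ := y - x with hrd
  have hr : r ≠ 0 := sub_ne_zero.mpr (Ne.symm hne)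
  have hp0 : (p : ℚ) ≠ 0 := by exact_mod_cast hp.pos.ne'
  have hre : r = Rat.divInt (m' * (p : ℤ) ^ a - m * (p : ℤ) ^ b) ((p : ℤ) ^ (a + b)) := by
    rw [Rat.divInt_eq_div, hrd, hxd, hyd]
    push_cast
    field_simp
    ring
  have hdvdZ : (r.den : ℤ) ∣ (p : ℤ) ^ (a + b) := by rw [hre]; exact Rat.den_dvd _ _
  have hdvd : r.den ∣ p ^ (a + b) := by exact_mod_cast hdvdZ
  obtain ⟨k, -, hk⟩ := (Nat.dvd_prime_pow hp).mp hdvd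
  have habs : |r| < 1 := abs_lt.mpr ⟨by linarith [hy0, hx1], by linarith [hx0, hy1]⟩
  have h1 : r.den ≠ 1 := by
    intro h
    have hnum : r = (r.num : ℚ) := by
      conv_lhs => rw [← Rat.num_div_den r]
      rw [h]; simp
    rw [hnum] at habs
    have : |r.num| < 1 := by exact_mod_cast habs
    exact hr (by rw [hnum, Int.abs_lt_one_iff.mp this]; simp)
  have hnorm : padicNorm p r = (r.den : ℚ) := padicNorm_eq_den19 hp hr hk h1
  have hden2 : 2 ≤ r.den := by
    have hk0 : k ≠ 0 := by rintro rfl; simp at hk; exact h1 hk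
    calc 2 ≤ p := hp.two_le
    _ ≤ p ^ k := Nat.le_self_pow hk0 p
    _ = r.den := hk.symm
  have hcast : ((padicNorm p r : ℚ) : ℝ) = (r.den : ℝ) := by rw [hnorm]; push_cast; ring
  have habsR : |(r : ℝ)| < 1 := by
    rw [← Rat.cast_abs]; exact_mod_cast habs
  have hlog2 : Real.log 2 ≤ Real.log (r.den : ℝ) :=
    Real.log_le_log (by norm_num) (by exact_mod_cast hden2)
  have hlog2' : (0.6931471803 : ℝ) < Real.log 2 := Real.log_two_gt_d9
  have hq : qDist x y = |(r : ℝ)| + Real.log (r.den : ℝ) := by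
    rw [qDist, qNorm, hrd]
  refine ⟨by rw [hcast]; exact_mod_cast hden2, ?_, ?_⟩
  · rw [hcast, hq]; linarith [abs_nonneg (r : ℝ)]
  · rw [hcast, hq]; nlinarith [abs_nonneg (r : ℝ)]

private lemma ball_eq19 {p : ℕ} [Fact p.Prime] {q0 q1 c : ℚ}
    (h : padicNorm p (q0 - q1) ≤ c) :
    {x : ℚ | padicNorm p (x - q0) ≤ c} = {x : ℚ | padicNorm p (x - q1) ≤ c} := by
  have h' : padicNorm p (q1 - q0) ≤ c := by
    rw [← padicNorm.neg, neg_sub]; exact h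
  ext z
  simp only [Set.mem_setOf_eq]
  constructor <;> intro hz
  · have hn := padicNorm.nonarchimedean (p := p) (q := z - q0) (r := q0 - q1)
    rw [sub_add_sub_cancel] at hn
    exact hn.trans (max_le hz h)
  · have hn := padicNorm.nonarchimedean (p := p) (q := z - q1) (r := q1 - q0)
    rw [sub_add_sub_cancel] at hn
    exact hn.trans (max_le hz h')

/-- On `X = {m/p^a} ∩ [0,1)` the metrics from the `p`-adic norm and from `qNorm` satisfy
`ln d_p ≤ d_ℚ ≤ 3 ln d_p`; hence the identity `(X, d_ℚ) → (X, d_p)` is a coarse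
equivalence and `asdim (ℚ, ‖·‖_p) = 0`. -/
theorem stmt19 (p : ℕ) (hp : p.Prime) :
    (∀ x y : {q : ℚ // (∃ m : ℤ, ∃ a : ℕ, q = (m : ℚ) / (p : ℚ) ^ a) ∧ 0 ≤ q ∧ q < 1},
      x ≠ y →
        Real.log ((padicNorm p ((y : ℚ) - (x : ℚ)) : ℝ)) ≤ qDist (x : ℚ) (y : ℚ) ∧
        qDist (x : ℚ) (y : ℚ) ≤ 3 * Real.log ((padicNorm p ((y : ℚ) - (x : ℚ)) : ℝ))) ∧
    CoarseEquivD
      (fun a b : {q : ℚ // (∃ m : ℤ, ∃ a : ℕ, q = (m : ℚ) / (p : ℚ) ^ a) ∧ 0 ≤ q ∧ q < 1} =>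
        qDist (a : ℚ) (b : ℚ))
      (fun a b : {q : ℚ // (∃ m : ℤ, ∃ a : ℕ, q = (m : ℚ) / (p : ℚ) ^ a) ∧ 0 ≤ q ∧ q < 1} =>
        ((padicNorm p ((b : ℚ) - (a : ℚ)) : ℝ)))
      id ∧
    AsdimLE_D (fun x y : ℚ => ((padicNorm p (y - x) : ℝ))) 0 := by
  have hfact : Fact p.Prime := ⟨hp⟩
  have hp1R : (1 : ℝ) < (p : ℝ) := by exact_mod_cast hp.one_lt
  set X := {q : ℚ // (∃ m : ℤ, ∃ a : ℕ, q = (m : ℚ) / (p : ℚ) ^ a) ∧ 0 ≤ q ∧ q < 1} with hX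
  have main : ∀ x y : X, x ≠ y →
      (2 : ℝ) ≤ ((padicNorm p ((y : ℚ) - (x : ℚ)) : ℚ) : ℝ) ∧
      Real.log ((padicNorm p ((y : ℚ) - (x : ℚ)) : ℚ) : ℝ) ≤ qDist (x : ℚ) (y : ℚ) ∧
      qDist (x : ℚ) (y : ℚ) ≤ 3 * Real.log ((padicNorm p ((y : ℚ) - (x : ℚ)) : ℚ) : ℝ) := by
    intro x y hne
    have hne' : (x : ℚ) ≠ (y : ℚ) := fun h => hne (Subtype.ext h)
    exact aux_main19 hp x.2.1 y.2.1 x.2.2.1 x.2.2.2 y.2.2.1 y.2.2.2 hne'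
  have hself : ∀ x : X, qDist (x : ℚ) (x : ℚ) = 0 := by
    intro x; simp [qDist, qNorm]
  have hselfp : ∀ x : X, ((padicNorm p ((x : ℚ) - (x : ℚ)) : ℚ) : ℝ) = 0 := by
    intro x; simp
  refine ⟨fun x y hne => ⟨(main x y hne).2.1, (main x y hne).2.2⟩, ?_, ?_⟩
  · -- coarse equivalence
    have fwd : CoarseMapD (fun a b : X => qDist (a : ℚ) (b : ℚ))
        (fun a b : X => ((padicNorm p ((b : ℚ) - (a : ℚ)) : ℚ) : ℝ)) id := by
      constructor
      · intro R hR
        refine ⟨Real.exp R, Real.exp_pos R, fun x y hxy => ?_⟩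
        dsimp only [id_eq] at hxy ⊢
        by_cases h : x = y
        · subst h; rw [hselfp x]; exact Real.exp_pos R
        · obtain ⟨h2, hl, -⟩ := main x y h
          have hpos : (0 : ℝ) < ((padicNorm p ((y : ℚ) - (x : ℚ)) : ℚ) : ℝ) := by linarith
          exact (Real.log_lt_iff_lt_exp hpos).mp (lt_of_le_of_lt hl hxy)
      · intro B ⟨C, hC⟩
        refine ⟨max (3 * Real.log C) 0, fun x hx y hy => ?_⟩
        dsimp only [id_eq] at *
        by_cases h : x = y
        · subst h; rw [hself x]; exact le_max_right _ _
        · obtain ⟨h2, -, hu⟩ := main x y h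
          have hC' := hC x hx y hy
          have : Real.log ((padicNorm p ((y : ℚ) - (x : ℚ)) : ℚ) : ℝ) ≤ Real.log C :=
            Real.log_le_log (by linarith) hC'
          exact le_max_of_le_left (by linarith)
    have bwd : CoarseMapD (fun a b : X => ((padicNorm p ((b : ℚ) - (a : ℚ)) : ℚ) : ℝ))
        (fun a b : X => qDist (a : ℚ) (b : ℚ)) id := by
      constructor
      · intro R hR
        refine ⟨max (3 * Real.log R) 0 + 1, by positivity, fun x y hxy => ?_⟩
        dsimp only [id_eq] at hxy ⊢
        by_cases h : x = y
        · subst h; rw [hself x]; positivity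
        · obtain ⟨h2, -, hu⟩ := main x y h
          have hlt : Real.log ((padicNorm p ((y : ℚ) - (x : ℚ)) : ℚ) : ℝ) < Real.log R :=
            Real.log_lt_log (by linarith) hxy
          have : qDist (x : ℚ) (y : ℚ) ≤ max (3 * Real.log R) 0 := by
            refine le_max_of_le_left ?_
            linarith
          linarith
      · intro B ⟨C, hC⟩
        refine ⟨max (Real.exp C) 0, fun x hx y hy => ?_⟩
        dsimp only [id_eq] at *
        by_cases h : x = y
        · subst h; rw [hselfp x]; exact le_max_right _ _
        · obtain ⟨h2, hl, -⟩ := main x y h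
          have hC' := hC x hx y hy
          have : Real.log ((padicNorm p ((y : ℚ) - (x : ℚ)) : ℚ) : ℝ) ≤ C := le_trans hl hC'
          exact le_max_of_le_left ((Real.log_le_iff_le_exp (by linarith)).mp this)
    exact ⟨fwd, id, bwd, ⟨0, fun x => by simp [hselfp]⟩, ⟨0, fun x => by simp [hself]⟩⟩
  · -- asymptotic dimension 0
    intro d hd
    obtain ⟨a, ha⟩ := pow_unbounded_of_one_lt d hp1R
    refine ⟨(p : ℝ) ^ a,
      fun _ => {A | ∃ q : ℚ, A = {x : ℚ | padicNorm p (x - q) ≤ (p : ℚ) ^ a}}, ?_, ?_, ?_⟩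
    · rintro i A ⟨q0, rfl⟩ B ⟨q1, rfl⟩ hAB x hxA y hyB
      by_contra hcon
      push_neg at hcon
      have hlt : padicNorm p (y - x) ≤ (p : ℚ) ^ a := by
        have : ((padicNorm p (y - x) : ℚ) : ℝ) ≤ ((p : ℚ) ^ a : ℚ) := by
          push_cast
          calc ((padicNorm p (y - x) : ℚ) : ℝ) ≤ d := hcon
          _ ≤ (p : ℝ) ^ a := le_of_lt ha
        exact_mod_cast this
      apply hAB
      have hq : padicNorm p (q0 - q1) ≤ (p : ℚ) ^ a := by
        have e : q0 - q1 = (q0 - x) + ((x - y) + (y - q1)) := by ring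
        rw [e]
        refine le_trans padicNorm.nonarchimedean (max_le ?_ ?_)
        · rw [← padicNorm.neg, neg_sub]; exact hxA
        · refine le_trans padicNorm.nonarchimedean (max_le ?_ ?_)
          · rw [← padicNorm.neg, neg_sub]; exact hlt
          · exact hyB
      exact ball_eq19 hq
    · rintro i A ⟨q0, rfl⟩ x hx y hy
      have hb : padicNorm p (y - x) ≤ (p : ℚ) ^ a := by
        have e : y - x = (y - q0) - (x - q0) := by ring
        rw [e]
        exact le_trans padicNorm.sub (max_le hy hx)
      calc ((padicNorm p (y - x) : ℚ) : ℝ) ≤ (((p : ℚ) ^ a : ℚ) : ℝ) := by exact_mod_cast hb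
      _ = (p : ℝ) ^ a := by push_cast; ring
    · intro x
      refine ⟨0, _, ⟨x, rfl⟩, ?_⟩
      simp only [Set.mem_setOf_eq, sub_self, padicNorm.zero]
      positivity
end
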